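/- Let R be a commutative ring with unit, F ⊆ R⟨X⟩, and f ∈ (F) an element of the two-sided ideal generated by F. Let Q = (V, E, X, s, t, l) be a labelled quiver such that f is compatible with Q and all elements of F are uniformly compatible with Q. Then for every R-linear category 𝒞 and every representation (𝒱, φ) of Q in 𝒞 consistent with the labelling such that every realization of every element of F is zero, every realization of f is zero; that is, φ_{v,w}(f) = 0 in Hom_𝒞(𝒱_v, 𝒱_w) for all (v, w) ∈ σ(f). -/

import Mathlib

open scoped BigOperators

/-- The free `R`-algebra `R⟨X⟩` on `X`, as the monoid algebra over `R`
of the free monoid `⟨X⟩` of words over `X`. -/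
abbrev FreeAlg (R X : Type*) [CommRing R] := MonoidAlgebra R (FreeMonoid X)

/-- The monomial in `R⟨X⟩` corresponding to a word `m ∈ ⟨X⟩`. -/
noncomputable def monom (R : Type*) [CommRing R] {X : Type*} (m : FreeMonoid X) : FreeAlg R X :=
  MonoidAlgebra.of R (FreeMonoid X) m

/-- `h` is obtained from `f` by a rewriting step using `g`: some monomial `m_g` in the
support of `g` divides a monomial `a·m_g·b` in the support of `f`, and
`h = f + λ·a·g·b` for some `λ ∈ R`. -/
def RewriteStep {R X : Type*} [CommRing R] (g f h : FreeAlg R X) : Prop :=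
  ∃ (a b mg : FreeMonoid X) (lam : R),
    mg ∈ (g.coeff : FreeMonoid X →₀ R).support ∧
    a * mg * b ∈ (f.coeff : FreeMonoid X →₀ R).support ∧
    h = f + lam • (monom R a * g * monom R b)

/-- `f` can be rewritten to `h` using the set `G`: there is a finite chain of rewriting
steps, each using an element of `G`, leading from `f` to `h`. -/
def RewritesTo {R X : Type*} [CommRing R] (G : Set (FreeAlg R X)) (f h : FreeAlg R X) : Prop :=
  Relation.ReflTransGen (fun p q => ∃ g ∈ G, RewriteStep g p q) f h

/-- Membership in the two-sided ideal `(F)` generated by `F`: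
`f` is a finite sum `Σᵢ aᵢ·fᵢ·bᵢ` with `aᵢ, bᵢ ∈ R⟨X⟩` and `fᵢ ∈ F`. -/
def MemIdeal {R X : Type*} [CommRing R] (F : Set (FreeAlg R X)) (f : FreeAlg R X) : Prop :=
  ∃ (n : ℕ) (a b g : Fin n → FreeAlg R X),
    (∀ i, g i ∈ F) ∧ f = ∑ i, a i * g i * b i

/-- A labelled quiver `Q = (V, E, X, s, t, l)`: a directed multigraph with vertex set `V`,
edge set `E`, source and target maps `s, t : E → V` and labelling `l : E → X`. -/
structure LabelledQuiver (V E X : Type*) where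
  src : E → V
  tgt : E → V
  lab : E → X

/-- Paths in a labelled quiver `Q`; `LQPath Q u w` is the type of paths with source `u` and
target `w`.  `nil v` is the empty path at `v`; `cons e p` appends the edge `e` after `p`. -/
inductive LQPath {V E X : Type*} (Q : LabelledQuiver V E X) : V → V → Type _ where
  | nil (v : V) : LQPath Q v v
  | cons {u : V} (e : E) (p : LQPath Q u (Q.src e)) : LQPath Q u (Q.tgt e)

namespace LQPath
variable {V E X : Type*} {Q : LabelledQuiver V E X}
/-- The label `l(p) = l(eₙ)⋯l(e₁) ∈ ⟨X⟩` of a path; the empty path has label `1`. -/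
def label : {u w : V} → LQPath Q u w → FreeMonoid X
  | _, _, .nil _ => 1
  | _, _, .cons e p => FreeMonoid.of (Q.lab e) * p.label
end LQPath

namespace LabelledQuiver

variable {V E X : Type*} (Q : LabelledQuiver V E X)

/-- The set of signatures `σ(m) = {(s(p), t(p)) : p a path in Q with l(p) = m}`. -/
def sigmaM (m : FreeMonoid X) : Set (V × V) :=
  {vw | ∃ p : LQPath Q vw.1 vw.2, p.label = m}

variable {R : Type*} [CommRing R]

/-- The set of signatures `σ(f) = ⋂_{m ∈ supp(f)} σ(m)` of a polynomial. -/
def sigmaP (f : FreeAlg R X) : Set (V × V) :=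
  ⋂ m ∈ (f.coeff : FreeMonoid X →₀ R).support, Q.sigmaM m

/-- `f` is compatible with `Q` if `σ(f) ≠ ∅`. -/
def Compatible (f : FreeAlg R X) : Prop :=
  (Q.sigmaP f).Nonempty

/-- `f` is uniformly compatible with `Q` if it is compatible and all monomials in its
support have the same set of signatures. -/
def UniformlyCompatible (f : FreeAlg R X) : Prop :=
  Q.Compatible f ∧
    ∀ m ∈ (f.coeff : FreeMonoid X →₀ R).support, ∀ m' ∈ (f.coeff : FreeMonoid X →₀ R).support,
      Q.sigmaM m = Q.sigmaM m'

/-- The set of sources `s(f)` of a polynomial: the projection of `σ(f)` to the first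
component. -/
def srcSet (f : FreeAlg R X) : Set V := Prod.fst '' Q.sigmaP f

/-- The set of targets `t(f)` of a polynomial: the projection of `σ(f)` to the second
component. -/
def tgtSet (f : FreeAlg R X) : Set V := Prod.snd '' Q.sigmaP f

end LabelledQuiver

open CategoryTheory

/-- A representation `(𝒱, φ)` of a labelled quiver `Q` in an `R`-linear category `C`:
a `C`-object `𝒱_v` for each vertex `v` and a morphism `φ(e) ∈ Hom_C(𝒱_{s(e)}, 𝒱_{t(e)})`
for each edge `e`. -/
structure CatQuiverRep (R : Type*) [CommRing R] {V E X : Type*} (Q : LabelledQuiver V E X)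
    (C : Type*) [Category C] [Preadditive C] [CategoryTheory.Linear R C] where
  obj : V → C
  map : (e : E) → (obj (Q.src e) ⟶ obj (Q.tgt e))

namespace CatQuiverRep

variable {R : Type*} [CommRing R] {V E X : Type*} {Q : LabelledQuiver V E X}
  {C : Type*} [Category C] [Preadditive C] [CategoryTheory.Linear R C]

/-- The morphism `φ(eₙ)⋯φ(e₁)` induced by a path; the empty path induces the identity. -/
def pathMap (ρ : CatQuiverRep R Q C) : {u w : V} → LQPath Q u w → (ρ.obj u ⟶ ρ.obj w)
  | _, _, .nil _ => 𝟙 _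
  | _, _, .cons e p => ρ.pathMap p ≫ ρ.map e

/-- A representation is consistent with the labelling if any two paths with the same source,
the same target and the same label induce the same morphism. -/
def Consistent (ρ : CatQuiverRep R Q C) : Prop :=
  ∀ (u w : V) (p q : LQPath Q u w), p.label = q.label → ρ.pathMap p = ρ.pathMap q

/-- The realization `φ_{v,w}(f)` of a polynomial `f` as a morphism in `C`: the `R`-linear
extension of the assignment sending the label of a path from `v` to `w` to the composition of
the morphisms along the path (an arbitrary such path is chosen for each monomial; for a
consistent representation the result does not depend on this choice). -/
noncomputable def realize (ρ : CatQuiverRep R Q C) (v w : V) (f : FreeAlg R X) :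
    ρ.obj v ⟶ ρ.obj w :=
  Finsupp.sum (f.coeff : FreeMonoid X →₀ R) fun m c =>
    letI := Classical.propDecidable (∃ p : LQPath Q v w, p.label = m)
    c • (if h : ∃ p : LQPath Q v w, p.label = m then ρ.pathMap h.choose else 0)

end CatQuiverRep

/-!
A realization `φ_{v,w}` is `R`-linear, so it suffices to show that it kills every
`m · g · m'` with `g ∈ F` and `m, m'` monomials.  If some monomial `m · m₀ · m'`, `m₀ ∈ supp g`,
is the label of a path from `v` to `w`, cutting this path gives paths `p'` from `v` to `v₁` and
`p` from `v₂` to `w` labelled `m'` and `m`, and `(v₁, v₂) ∈ σ(m₀) = σ(g)` by uniform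
compatibility.  Consistency then factors the realization as
`φ(p') ≫ φ_{v₁,v₂}(g) ≫ φ(p) = 0`.  Otherwise no monomial of `m · g · m'` is the label of a
path from `v` to `w`, and the realization vanishes term by term.
-/

namespace LQPath

variable {V E X : Type*} {Q : LabelledQuiver V E X}

def comp : {u v w : V} → LQPath Q u v → LQPath Q v w → LQPath Q u w
  | _, _, _, p, .nil _ => p
  | _, _, _, p, .cons e q => .cons e (p.comp q)

theorem label_comp : ∀ {u v w : V} (p : LQPath Q u v) (q : LQPath Q v w),
    (p.comp q).label = q.label * p.label
  | _, _, _, _, .nil _ => by simp [comp, label]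
  | _, _, _, p, .cons e q => by simp [comp, label, label_comp p q, mul_assoc]

theorem exists_split_of_label_eq_mul {v w : V} (x y : FreeMonoid X) (p : LQPath Q v w)
    (h : p.label = x * y) :
    ∃ (u : V) (q : LQPath Q v u) (r : LQPath Q u w), q.label = y ∧ r.label = x := by
  induction x using FreeMonoid.recOn generalizing w p with
  | one => exact ⟨w, p, .nil w, by simpa using h, by simp [label]⟩
  | of_mul a x ih =>
    cases p with
    | nil => simpa [label] using congrArg FreeMonoid.toList h
    | cons e p =>
      have hlist := congrArg FreeMonoid.toList h
      simp only [label, FreeMonoid.toList_mul, FreeMonoid.toList_of,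
        List.cons_append, List.cons.injEq] at hlist
      obtain ⟨hlab, hp⟩ := hlist
      obtain ⟨u, q, r, hq, hr⟩ :=
        ih p (FreeMonoid.toList.injective (by simpa using hp))
      exact ⟨u, q, .cons e r, hq, by simp [label, hr, hlab]⟩

end LQPath

namespace LabelledQuiver

variable {V E X R : Type*} [CommRing R] {Q : LabelledQuiver V E X}

theorem UniformlyCompatible.mem_sigmaP {g : FreeAlg R X} (hg : Q.UniformlyCompatible g)
    {m₀ : FreeMonoid X} (hm₀ : m₀ ∈ g.coeff.support) {vw : V × V} (hvw : vw ∈ Q.sigmaM m₀) :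
    vw ∈ Q.sigmaP g :=
  Set.mem_iInter₂.2 fun m hm => hg.2 m hm m₀ hm₀ ▸ hvw

end LabelledQuiver

namespace CatQuiverRep

variable {R : Type*} [CommRing R] {V E X : Type*} {Q : LabelledQuiver V E X}
  {C : Type*} [Category C] [Preadditive C] [CategoryTheory.Linear R C]
  (ρ : CatQuiverRep R Q C)

theorem pathMap_comp : ∀ {u v w : V} (p : LQPath Q u v) (q : LQPath Q v w),
    ρ.pathMap (p.comp q) = ρ.pathMap p ≫ ρ.pathMap q
  | _, _, _, _, .nil _ => by simp [LQPath.comp, pathMap]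
  | _, _, _, p, .cons e q => by simp [LQPath.comp, pathMap, pathMap_comp p q]

noncomputable def monomialMap (v w : V) (m : FreeMonoid X) : ρ.obj v ⟶ ρ.obj w :=
  letI := Classical.propDecidable (∃ p : LQPath Q v w, p.label = m)
  if h : ∃ p : LQPath Q v w, p.label = m then ρ.pathMap h.choose else 0

theorem monomialMap_eq_pathMap (hρ : ρ.Consistent) {v w : V} (p : LQPath Q v w) :
    ρ.monomialMap v w p.label = ρ.pathMap p := by
  have hex : ∃ q : LQPath Q v w, q.label = p.label := ⟨p, rfl⟩
  rw [monomialMap, dif_pos hex]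
  exact hρ _ _ _ _ hex.choose_spec

theorem monomialMap_eq_zero {v w : V} {m : FreeMonoid X}
    (h : ¬ ∃ p : LQPath Q v w, p.label = m) : ρ.monomialMap v w m = 0 :=
  dif_neg h

noncomputable def realizeₗ (v w : V) : FreeAlg R X →ₗ[R] (ρ.obj v ⟶ ρ.obj w) :=
  Finsupp.linearCombination R (ρ.monomialMap v w) ∘ₗ
    (MonoidAlgebra.coeffLinearEquiv R).toLinearMap

theorem realizeₗ_apply (v w : V) (f : FreeAlg R X) : ρ.realizeₗ v w f = ρ.realize v w f :=
  rfl

theorem realize_eq_sum (v w : V) (f : FreeAlg R X) :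
    ρ.realize v w f = f.coeff.sum fun m c => c • ρ.monomialMap v w m :=
  rfl

theorem realize_monom_mul_mul_monom (v w : V) (m m' : FreeMonoid X) (g : FreeAlg R X) :
    ρ.realize v w (monom R m * g * monom R m') =
      g.coeff.sum fun m₀ c => c • ρ.monomialMap v w (m * m₀ * m') := by
  have hexpand : monom R m * g * monom R m' =
      g.coeff.sum fun m₀ c => MonoidAlgebra.single (m * m₀ * m') c := by
    conv_lhs => rw [← MonoidAlgebra.sum_coeff_single g]
    simp only [monom, MonoidAlgebra.of_apply, Finsupp.mul_sum, Finsupp.sum_mul,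
      MonoidAlgebra.single_mul_single, one_mul, mul_one]
  rw [← realizeₗ_apply, hexpand, map_finsuppSum]
  refine Finsupp.sum_congr fun m₀ _ => ?_
  exact Finsupp.linearCombination_single _ _ _

theorem realize_monom_mul_mul_monom_eq_comp (hρ : ρ.Consistent) {g : FreeAlg R X}
    {v v₁ v₂ w : V} (hg : (v₁, v₂) ∈ Q.sigmaP g) (p' : LQPath Q v v₁) (p : LQPath Q v₂ w) :
    ρ.realize v w (monom R p.label * g * monom R p'.label) =
      ρ.pathMap p' ≫ ρ.realize v₁ v₂ g ≫ ρ.pathMap p := by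
  have hfactor : ∀ m₀ ∈ g.coeff.support, ρ.monomialMap v w (p.label * m₀ * p'.label) =
      ρ.pathMap p' ≫ ρ.monomialMap v₁ v₂ m₀ ≫ ρ.pathMap p := by
    intro m₀ hm₀
    obtain ⟨q, rfl⟩ := Set.mem_iInter₂.1 hg m₀ hm₀
    rw [← LQPath.label_comp, ← LQPath.label_comp, ρ.monomialMap_eq_pathMap hρ,
      ρ.monomialMap_eq_pathMap hρ, pathMap_comp, pathMap_comp]
  rw [realize_monom_mul_mul_monom, realize_eq_sum, Finsupp.sum, Finsupp.sum,
    Preadditive.sum_comp, Preadditive.comp_sum]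
  refine Finset.sum_congr rfl fun m₀ hm₀ => ?_
  rw [hfactor m₀ hm₀, Linear.smul_comp, Linear.comp_smul]

theorem realize_monom_mul_mul_monom_eq_zero (hρ : ρ.Consistent) {g : FreeAlg R X}
    (hg : Q.UniformlyCompatible g) (hz : ∀ v w : V, (v, w) ∈ Q.sigmaP g → ρ.realize v w g = 0)
    (v w : V) (m m' : FreeMonoid X) : ρ.realize v w (monom R m * g * monom R m') = 0 := by
  by_cases hpath : ∃ m₀ ∈ g.coeff.support, ∃ p : LQPath Q v w, p.label = m * m₀ * m'
  · obtain ⟨m₀, hm₀, p, hp⟩ := hpath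
    obtain ⟨v₂, q, p, hq, rfl⟩ :=
      p.exists_split_of_label_eq_mul m (m₀ * m') (by rw [hp, mul_assoc])
    obtain ⟨v₁, p', q, rfl, rfl⟩ := q.exists_split_of_label_eq_mul m₀ m' hq
    rw [ρ.realize_monom_mul_mul_monom_eq_comp hρ (hg.mem_sigmaP hm₀ ⟨q, rfl⟩),
      hz _ _ (hg.mem_sigmaP hm₀ ⟨q, rfl⟩), Limits.zero_comp, Limits.comp_zero]
  · push Not at hpath
    rw [realize_monom_mul_mul_monom]
    refine Finset.sum_eq_zero fun m₀ hm₀ => ?_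
    dsimp only
    rw [ρ.monomialMap_eq_zero fun ⟨p, hp⟩ => hpath m₀ hm₀ p hp, smul_zero]

theorem realize_mul_mul_eq_zero (hρ : ρ.Consistent) {g : FreeAlg R X}
    (hg : Q.UniformlyCompatible g) (hz : ∀ v w : V, (v, w) ∈ Q.sigmaP g → ρ.realize v w g = 0)
    (v w : V) (a b : FreeAlg R X) : ρ.realize v w (a * g * b) = 0 := by
  simp only [← realizeₗ_apply]
  induction a using MonoidAlgebra.induction_on with
  | of m =>
    induction b using MonoidAlgebra.induction_on with
    | of m' => exact ρ.realize_monom_mul_mul_monom_eq_zero hρ hg hz v w m m'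
    | add b b' hb hb' => rw [mul_add, map_add, hb, hb', add_zero]
    | smul r b hb => rw [mul_smul_comm, map_smul, hb, smul_zero]
  | add a a' ha ha' => rw [add_mul, add_mul, map_add, ha, ha', add_zero]
  | smul r a ha => rw [smul_mul_assoc, smul_mul_assoc, map_smul, ha, smul_zero]

end CatQuiverRep

theorem main_theorem_Rlinear_general {R X : Type*} [CommRing R] (F : Set (FreeAlg R X))
    (f : FreeAlg R X) (hf : MemIdeal F f) {V E : Type*} (Q : LabelledQuiver V E X)
    (hF : ∀ g ∈ F, Q.UniformlyCompatible g)
    {C : Type*} [Category C] [Preadditive C] [CategoryTheory.Linear R C]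
    (ρ : CatQuiverRep R Q C) (hρ : ρ.Consistent)
    (hzero : ∀ g ∈ F, ∀ v w : V, (v, w) ∈ Q.sigmaP g → ρ.realize v w g = 0) :
    ∀ v w : V, (v, w) ∈ Q.sigmaP f → ρ.realize v w f = 0 := by
  intro v w _
  obtain ⟨n, a, b, g, hgF, rfl⟩ := hf
  rw [← CatQuiverRep.realizeₗ_apply, map_sum]
  exact Finset.sum_eq_zero fun i _ =>
    ρ.realize_mul_mul_eq_zero hρ (hF _ (hgF i)) (hzero _ (hgF i)) v w (a i) (b i)

/-- Let `f` lie in the two-sided ideal generated by `F ⊆ R⟨X⟩`, let `Q` be a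
labelled quiver such that `f` is compatible and all elements of `F` are uniformly compatible
with `Q`. Then for every `R`-linear category `C` and every consistent representation of `Q` in
`C` such that every realization of every element of `F` is zero, every realization of `f` is
zero: `φ_{v,w}(f) = 0` in `Hom_C(𝒱_v, 𝒱_w)` for all `(v, w) ∈ σ(f)`. -/
theorem main_theorem_Rlinear {R X : Type*} [CommRing R] (F : Set (FreeAlg R X))
    (f : FreeAlg R X) (hf : MemIdeal F f) {V E : Type*} (Q : LabelledQuiver V E X)
    (hcf : Q.Compatible f) (hF : ∀ g ∈ F, Q.UniformlyCompatible g)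
    {C : Type*} [Category C] [Preadditive C] [CategoryTheory.Linear R C]
    (ρ : CatQuiverRep R Q C) (hρ : ρ.Consistent)
    (hzero : ∀ g ∈ F, ∀ v w : V, (v, w) ∈ Q.sigmaP g → ρ.realize v w g = 0) :
    ∀ v w : V, (v, w) ∈ Q.sigmaP f → ρ.realize v w f = 0 :=
  main_theorem_Rlinear_general F f hf Q hF ρ hρ hzero
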